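/- Under the tame structure of the previous statement, if I - S has ‖S‖_op < 1 and all seminorms of S finite, then the Neumann series Σ_{n≥0} S^n converges absolutely in each of the seminorms ‖·‖_1, ‖·‖_2, ‖·‖_{12}, and hence (I - S)⁻¹ has finite seminorms ‖·‖_1, ‖·‖_2, ‖·‖_{12}. -/

import Mathlib

/-!
Write `r = op S < 1`. Splitting `S^(m+n) = S^m * S^n`, the tame estimates give, for each
seminorm `b n = s (S^n)`, a recursion `b (m+n) ≤ C (r^m b n + b m r^n) + K ρ^(m+n)`. The constant
`C ≥ 1` rules out a naive geometric bound, but for a block length `m` with `C r^m` small the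
recursion becomes a contraction, so `b n = O(ρ^n)` for every `ρ ∈ (r, 1)`. This is done first for
`s1` and `s2` (`K = 0`) and then for `s12`, whose cross terms `s1 (S^m) s2 (S^n)` are already
`O(ρ^(m+n))`. The Neumann series therefore converges in the full norm, and telescoping shows that
its sum inverts `1 - S`.
-/

theorem exists_forall_le_of_tame_recursion {a : ℕ → ℝ} {q C K : ℝ} (ha : ∀ n, 0 ≤ a n)
    (hq0 : 0 ≤ q) (hq1 : q < 1) (hC : 0 ≤ C)
    (hrec : ∀ m n, a (m + n) ≤ C * (q ^ m * a n + a m * q ^ n) + K) :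
    ∃ M, ∀ n, a n ≤ M := by
  obtain ⟨m, hm⟩ : ∃ m, C * q ^ (m + 1) < 1 / 2 := by
    have h := (tendsto_pow_atTop_nhds_zero_of_lt_one hq0 hq1).const_mul C
    rw [mul_zero] at h
    exact (((Filter.tendsto_add_atTop_iff_nat 1).2 h).eventually (gt_mem_nhds one_half_pos)).exists
  set k := m + 1
  refine ⟨max (∑ i ∈ Finset.range k, a i) (2 * (C * a k + K)), fun n => ?_⟩
  induction n using Nat.strong_induction_on with
  | _ n ih =>
  rcases lt_or_ge n k with hn | hn
  · exact (Finset.single_le_sum (fun i _ => ha i) (Finset.mem_range.2 hn)).trans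
      (le_max_left _ _)
  · obtain ⟨j, rfl⟩ := Nat.exists_eq_add_of_le hn
    have hj := ih j (by omega)
    have hfirst : C * q ^ k * a j ≤ 1 / 2 * a j := mul_le_mul_of_nonneg_right hm.le (ha j)
    have hsecond : C * a k * q ^ j ≤ C * a k :=
      mul_le_of_le_one_right (mul_nonneg hC (ha k)) (pow_le_one₀ hq0 hq1.le)
    calc a (k + j) ≤ C * (q ^ k * a j + a k * q ^ j) + K := hrec k j
      _ ≤ 1 / 2 * a j + (C * a k + K) := by linarith
      _ ≤ _ := by linarith [le_max_right (∑ i ∈ Finset.range k, a i) (2 * (C * a k + K))]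

theorem exists_le_mul_pow_of_tame_recursion {b : ℕ → ℝ} {r ρ C K : ℝ} (hb : ∀ n, 0 ≤ b n)
    (hr : 0 ≤ r) (hrρ : r < ρ) (hC : 0 ≤ C)
    (hrec : ∀ m n, b (m + n) ≤ C * (r ^ m * b n + b m * r ^ n) + K * ρ ^ (m + n)) :
    ∃ M, ∀ n, b n ≤ M * ρ ^ n := by
  have hρ : 0 < ρ := hr.trans_lt hrρ
  obtain ⟨M, hM⟩ := exists_forall_le_of_tame_recursion (a := fun n => b n / ρ ^ n) (K := K)
    (fun n => div_nonneg (hb n) (by positivity)) (div_nonneg hr hρ.le) ((div_lt_one hρ).2 hrρ)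
    hC fun m n => by
      rw [div_le_iff₀ (by positivity)]
      refine (hrec m n).trans_eq ?_
      rw [div_pow, div_pow, pow_add]
      field_simp
  exact ⟨M, fun n => (div_le_iff₀ (by positivity)).1 (hM n)⟩

theorem mul_add_mul_le_of_le_mul_pow {f g : ℕ → ℝ} {M N ρ : ℝ} (hf0 : ∀ n, 0 ≤ f n)
    (hg0 : ∀ n, 0 ≤ g n) (hf : ∀ n, f n ≤ M * ρ ^ n) (hg : ∀ n, g n ≤ N * ρ ^ n) (m n : ℕ) :
    f m * g n + g m * f n ≤ 2 * (M * N) * ρ ^ (m + n) := by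
  have h₁ := mul_le_mul (hf m) (hg n) (hg0 n) ((hf0 m).trans (hf m))
  have h₂ := mul_le_mul (hg m) (hf n) (hf0 n) ((hg0 m).trans (hg m))
  calc f m * g n + g m * f n ≤ M * ρ ^ m * (N * ρ ^ n) + N * ρ ^ m * (M * ρ ^ n) := add_le_add h₁ h₂
    _ = 2 * (M * N) * ρ ^ (m + n) := by ring

section TameSeminorm

variable {A : Type*} [Monoid A] {op s : A → ℝ}

theorem apply_pow_le_of_submultiplicative (hop0 : ∀ x, 0 ≤ op x)
    (hsub : ∀ x y, op (x * y) ≤ op x * op y) (hopI : op 1 = 1) (S : A) (n : ℕ) :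
    op (S ^ n) ≤ op S ^ n := by
  induction n with
  | zero => simp [hopI]
  | succ n ih =>
    rw [pow_succ, pow_succ]
    exact (hsub _ _).trans (mul_le_mul_of_nonneg_right ih (hop0 S))

theorem apply_pow_add_le_of_tame {C r : ℝ} {E : A → A → ℝ} (hs0 : ∀ x, 0 ≤ s x) (hC : 0 ≤ C)
    (hs : ∀ x y, s (x * y) ≤ C * (op x * s y + s x * op y) + E x y)
    {S : A} (hpow : ∀ n, op (S ^ n) ≤ r ^ n) (m n : ℕ) :
    s (S ^ (m + n)) ≤ C * (r ^ m * s (S ^ n) + s (S ^ m) * r ^ n) + E (S ^ m) (S ^ n) := by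
  rw [pow_add]
  refine (hs _ _).trans ?_
  gcongr
  · exact hs0 _
  · exact hpow m
  · exact hs0 _
  · exact hpow n

end TameSeminorm

/-- In the tame Banach algebra (complete for the sum of the four (semi)norms),
if `op S < 1` then the Neumann series `Σ Sⁿ` converges absolutely in each of
the seminorms `s1, s2, s12`, and `1 - S` is invertible. -/
theorem stmt5 {A : Type*} [NormedRing A] [CompleteSpace A]
    (op s1 s2 s12 : A → ℝ)
    (hnorm_eq : ∀ x : A, ‖x‖ = op x + s1 x + s2 x + s12 x)
    (hop0 : ∀ x, 0 ≤ op x) (hs10 : ∀ x, 0 ≤ s1 x)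
    (hs20 : ∀ x, 0 ≤ s2 x) (hs120 : ∀ x, 0 ≤ s12 x)
    (hsub : ∀ x y, op (x * y) ≤ op x * op y)
    (hopI : op (1 : A) = 1)
    (C : ℝ) (hC : 1 ≤ C)
    (h12 : ∀ S T : A, s12 (S * T) ≤
      C * (op S * s12 T + s1 S * s2 T + s2 S * s1 T + s12 S * op T))
    (h1 : ∀ S T : A, s1 (S * T) ≤ C * (op S * s1 T + s1 S * op T))
    (h2 : ∀ S T : A, s2 (S * T) ≤ C * (op S * s2 T + s2 S * op T))
    (S : A) (hS : op S < 1) :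
    Summable (fun n : ℕ => s1 (S ^ n)) ∧
    Summable (fun n : ℕ => s2 (S ^ n)) ∧
    Summable (fun n : ℕ => s12 (S ^ n)) ∧
    ∃ T : A, HasSum (fun n : ℕ => S ^ n) T ∧
      (1 - S) * T = 1 ∧ T * (1 - S) = 1 := by
  have hC0 : 0 ≤ C := zero_le_one.trans hC
  have hpow := apply_pow_le_of_submultiplicative hop0 hsub hopI S
  obtain ⟨ρ, hrρ, hρ1⟩ := exists_between hS
  have hρ0 : 0 ≤ ρ := (hop0 S).trans hrρ.le
  have summable_of_le {b : ℕ → ℝ} {M : ℝ} (hb0 : ∀ n, 0 ≤ b n) (hb : ∀ n, b n ≤ M * ρ ^ n) :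
      Summable b :=
    .of_nonneg_of_le hb0 hb ((summable_geometric_of_lt_one hρ0 hρ1).mul_left M)
  obtain ⟨M1, hM1⟩ := exists_le_mul_pow_of_tame_recursion (K := 0) (fun n => hs10 _)
    (hop0 S) hrρ hC0 fun m n =>
      (apply_pow_add_le_of_tame (E := 0) hs10 hC0 (by simpa using h1) hpow m n).trans_eq (by simp)
  obtain ⟨M2, hM2⟩ := exists_le_mul_pow_of_tame_recursion (K := 0) (fun n => hs20 _)
    (hop0 S) hrρ hC0 fun m n =>
      (apply_pow_add_le_of_tame (E := 0) hs20 hC0 (by simpa using h2) hpow m n).trans_eq (by simp)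
  have h12' (x y : A) : s12 (x * y) ≤
      C * (op x * s12 y + s12 x * op y) + C * (s1 x * s2 y + s2 x * s1 y) :=
    (h12 x y).trans_eq (by ring)
  obtain ⟨M12, hM12⟩ := exists_le_mul_pow_of_tame_recursion (fun n => hs120 _)
    (hop0 S) hrρ hC0 fun m n =>
      (apply_pow_add_le_of_tame hs120 hC0 h12' hpow m n).trans <| by
        rw [mul_assoc C]
        gcongr
        exact mul_add_mul_le_of_le_mul_pow (fun n => hs10 _) (fun n => hs20 _) hM1 hM2 m n
  have hop : Summable fun n => op (S ^ n) := summable_of_le (M := 1) (fun n => hop0 _)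
    fun n => (hpow n).trans (by rw [one_mul]; exact pow_le_pow_left₀ (hop0 S) hrρ.le n)
  have hs1 := summable_of_le (fun n => hs10 _) hM1
  have hs2 := summable_of_le (fun n => hs20 _) hM2
  have hs12 := summable_of_le (fun n => hs120 _) hM12
  have hgeom : Summable (S ^ ·) := by
    refine Summable.of_norm ?_
    simp_rw [hnorm_eq]
    exact ((hop.add hs1).add hs2).add hs12
  exact ⟨hs1, hs2, hs12, _, hgeom.hasSum, hgeom.one_sub_mul_tsum_pow, hgeom.tsum_pow_mul_one_sub⟩
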